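/- arXiv:2105.07086 — 6 statements merged into one kernel-verified Lean document; each statement's English description precedes it below -/
import Mathlib

section
/- Let N, M be positive integers, A ∈ ℝ^{M×N}, x, h, g ∈ ℝ^N, w ∈ ℝ^M, and α, v_h, v_w, δ real numbers. Define r := x + h, y := A·x + w, and q̄ := g − α·r − x. Assume: (i) (1/N)·hᵀg = α·(1/N)‖h‖²; (ii) hᵀx = 0; (iii) (1/N)‖h‖² = v_h; (iv) (1/N)‖A·q̄‖² = (1/N)‖q̄‖²; (v) wᵀ(A·q̄) = 0; (vi) (1/N)‖w‖² = δ·v_w. Then u₁ + u₂·α + u₃·α² = 0, where u₁ := (1/N)‖g − r‖² − v_h − ((1/N)‖A·g − y‖² − δ·v_w), u₂ := (2/N)·((r − g)ᵀr − (y − A·g)ᵀ(A·r)), and u₃ := (1/N)‖r‖² − (1/N)‖A·r‖². -/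
open Matrix

/-- Finite-dimensional exact form of Theorem 2: the correction scalar `α`
satisfying the exact divergence-type identity, orthogonality relations and variance
normalizations is a root of the quadratic polynomial `u₁ + u₂·α̂ + u₃·α̂²`. -/
theorem alpha_is_root_of_quadratic
    (N M : ℕ) (hN : 0 < N) (hM : 0 < M)
    (A : Matrix (Fin M) (Fin N) ℝ) (x h g : Fin N → ℝ) (w : Fin M → ℝ)
    (α vh vw δ : ℝ)
    (r : Fin N → ℝ) (hr : r = x + h)
    (y : Fin M → ℝ) (hy : y = A.mulVec x + w)
    (q : Fin N → ℝ) (hq : q = g - α • r - x)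
    (h1 : (1 / N) * (h ⬝ᵥ g) = α * ((1 / N) * (h ⬝ᵥ h)))
    (h2 : h ⬝ᵥ x = 0)
    (h3 : (1 / N) * (h ⬝ᵥ h) = vh)
    (h4 : (1 / N) * (A.mulVec q ⬝ᵥ A.mulVec q) = (1 / N) * (q ⬝ᵥ q))
    (h5 : w ⬝ᵥ A.mulVec q = 0)
    (h6 : (1 / N) * (w ⬝ᵥ w) = δ * vw)
    (u₁ u₂ u₃ : ℝ)
    (hu₁ : u₁ = (1 / N) * ((g - r) ⬝ᵥ (g - r)) - vh -
      ((1 / N) * ((A.mulVec g - y) ⬝ᵥ (A.mulVec g - y)) - δ * vw))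
    (hu₂ : u₂ = (2 / N) * ((r - g) ⬝ᵥ r - (y - A.mulVec g) ⬝ᵥ (A.mulVec r)))
    (hu₃ : u₃ = (1 / N) * (r ⬝ᵥ r) - (1 / N) * (A.mulVec r ⬝ᵥ A.mulVec r)) :
    u₁ + u₂ * α + u₃ * α ^ 2 = 0 := by
  subst hr hy hq hu₁ hu₂ hu₃
  simp only [Matrix.mulVec_add, Matrix.mulVec_sub, Matrix.mulVec_smul,
    dotProduct_add, add_dotProduct, dotProduct_sub, sub_dotProduct,
    smul_dotProduct, dotProduct_smul, smul_eq_mul, dotProduct_comm] at *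
  linear_combination (-2 : ℝ) * h1 + ((2 + 2*α)/(N:ℝ)) * h2 - h4 +
    (2/(N:ℝ)) * h5 + h3 - h6
end

section
/- Let N be a positive integer, x, h, g ∈ ℝ^N, and α, v_h real numbers. Define r := x + h and, for a real α̂, f̂(α̂) := g − α̂·r. Assume: (i) (1/N)·hᵀg = α·v_h; (ii) hᵀx = 0; (iii) (1/N)‖h‖² = v_h. Then for every real α̂: (1/N)‖f̂(α̂) − x‖² = (1/N)‖f̂(α̂)‖² + (1/N)‖x‖² − (2/N)·rᵀf̂(α̂) + 2·(α − α̂)·v_h. -/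
open Matrix

/-- Finite-dimensional exact form of the SURE-type risk identity: under the
exact Stein-type divergence identity, orthogonality of the noise to the signal, and the noise
energy normalization, the SURE expression estimates the MSE of `f̂(a) = g - a • r` with exact
bias term `2·(α - a)·v_h`. -/
theorem sure_risk_identity
    (N : ℕ) (hN : 0 < N)
    (x h g : Fin N → ℝ) (α vh : ℝ)
    (r : Fin N → ℝ) (hr : r = x + h)
    (f : ℝ → (Fin N → ℝ)) (hf : ∀ a : ℝ, f a = g - a • r)
    (h1 : (1 / N) * (h ⬝ᵥ g) = α * vh)
    (h2 : h ⬝ᵥ x = 0)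
    (h3 : (1 / N) * (h ⬝ᵥ h) = vh) :
    ∀ a : ℝ,
      (1 / N) * ((f a - x) ⬝ᵥ (f a - x)) =
        (1 / N) * (f a ⬝ᵥ f a) + (1 / N) * (x ⬝ᵥ x) - (2 / N) * (r ⬝ᵥ f a)
          + 2 * (α - a) * vh := by
  intro a
  have hNne : (N:ℝ) ≠ 0 := Nat.cast_ne_zero.mpr hN.ne'
  have hxg : h ⬝ᵥ g = N * (α * vh) := by field_simp at h1; linarith
  have hhh : h ⬝ᵥ h = N * vh := by field_simp at h3; linarith
  have hgh : g ⬝ᵥ h = N * (α * vh) := by rw [dotProduct_comm]; exact hxg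
  have hxh : x ⬝ᵥ h = 0 := by rw [dotProduct_comm]; exact h2
  have hrx : r ⬝ᵥ x = x ⬝ᵥ x := by
    simp [hr, add_dotProduct, h2]
  have hxr : x ⬝ᵥ r = x ⬝ᵥ x := by rw [dotProduct_comm]; exact hrx
  simp only [hf, hr, sub_dotProduct, dotProduct_sub, add_dotProduct, dotProduct_add,
    smul_dotProduct, dotProduct_smul, smul_eq_mul, hxg, hgh, hhh, h2, hxh,
    dotProduct_comm g x]
  field_simp
  ring
end

section
/- Let N, M be positive integers, A ∈ ℝ^{M×N}, x, h, g ∈ ℝ^N, w ∈ ℝ^M, and α, v_h, v_w real numbers. Define r := x + h, y := A·x + w, q̄ := g − α·r − x, u₂ := (2/N)·((r − g)ᵀr − (y − A·g)ᵀ(A·r)), and u₃ := (1/N)‖r‖² − (1/N)‖A·r‖². Assume: (i) xᵀh = 0; (ii) xᵀq̄ = 0; (iii) xᵀ(Aᵀ(w − A·q̄)) = 0; (iv) hᵀq̄ = 0; (v) (1/N)·hᵀ(Aᵀw) = v_w; (vi) (1/N)‖h‖² = v_h. Then u₂ + 2·u₃·α = 2·(v_h + (1/N)·hᵀ(Aᵀ(A·q̄))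 − v_w). -/
open Matrix

/-- Finite-dimensional exact form of Theorem 4: under exact orthogonality
relations, the noise cross-correlation identity and the noise-energy normalization, the
derivative of the quadratic polynomial at `α̂ = α` equals
`2·(v_h + (1/N)·hᵀAᵀA·q̄ - v_w)`. -/
theorem derivative_value_general_oamp
    (N M : ℕ) (hN : 0 < N) (hM : 0 < M)
    (A : Matrix (Fin M) (Fin N) ℝ) (x h g : Fin N → ℝ) (w : Fin M → ℝ)
    (α vh vw : ℝ)
    (r : Fin N → ℝ) (hr : r = x + h)
    (y : Fin M → ℝ) (hy : y = A.mulVec x + w)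
    (q : Fin N → ℝ) (hq : q = g - α • r - x)
    (u₂ u₃ : ℝ)
    (hu₂ : u₂ = (2 / N) * ((r - g) ⬝ᵥ r - (y - A.mulVec g) ⬝ᵥ (A.mulVec r)))
    (hu₃ : u₃ = (1 / N) * (r ⬝ᵥ r) - (1 / N) * (A.mulVec r ⬝ᵥ A.mulVec r))
    (h1 : x ⬝ᵥ h = 0)
    (h2 : x ⬝ᵥ q = 0)
    (h3 : x ⬝ᵥ (Aᵀ.mulVec (w - A.mulVec q)) = 0)
    (h4 : h ⬝ᵥ q = 0)
    (h5 : (1 / N) * (h ⬝ᵥ Aᵀ.mulVec w) = vw)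
    (h6 : (1 / N) * (h ⬝ᵥ h) = vh) :
    u₂ + 2 * u₃ * α = 2 * (vh + (1 / N) * (h ⬝ᵥ Aᵀ.mulVec (A.mulVec q)) - vw) := by
  have hg : g = q + α • r + x := by rw [hq]; abel
  subst hg hr hy hu₂ hu₃
  subst h5 h6
  simp only [dotProduct_mulVec, vecMul_transpose, mulVec_add, mulVec_sub, mulVec_smul,
    add_dotProduct, sub_dotProduct, dotProduct_add, dotProduct_sub, smul_dotProduct,
    dotProduct_smul, smul_eq_mul] at *
  simp only [← dotProduct_mulVec, mulVec_add, mulVec_sub, mulVec_smul,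
    add_dotProduct, sub_dotProduct, dotProduct_add, dotProduct_sub,
    smul_dotProduct, dotProduct_smul, smul_eq_mul] at *
  simp only [dotProduct_comm] at *
  linear_combination (-2/N) * h3 + (2/N) * h1 - (2/N)*h2 - (2/N)*h4
end

section
/- Let N, M be positive integers, A ∈ ℝ^{M×N}, x, q, g ∈ ℝ^N, w ∈ ℝ^M, and α, ψ, γ, v_q, v_w, v_h real numbers with v_w > 0, v_q > 0 and γ ≠ 0. Define W := v_w·I_M + v_q·A·Aᵀ (which is invertible), z := w − A·q, F := W⁻¹·z, h := q + γ⁻¹·Aᵀ·F, r := x + h, y := A·x + w, q̄ := g − α·r − x, u₂ := (2/N)·((r − g)ᵀr − (y − A·g)ᵀ(A·r)), and u₃ := (1/N)‖r‖² − (1/N)‖A·r‖². Assume: (i) xᵀh = 0; (ii) xᵀq̄ = 0; (iii) xᵀ(Aᵀ(w − A·q̄)) = 0; (iv) hᵀq̄ = 0; (v) (1/N)·hᵀ(Aᵀw) = v_w; (vi) (1/N)‖h‖² = v_h; (vii) (1/N)·qᵀ(Aᵀ(A·q̄)) = ψ; (viii) (1/N)·zᵀ(A·q̄) = −ψ; (ix)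 (1/N)·Fᵀ(A·q̄) = −γ·ψ; (x) v_h = γ⁻¹ − v_q. Then (1/2)·(u₂ + 2·u₃·α) = ((v_w − v_h)/v_q)·(ψ − v_q). -/
open Matrix

lemma transp_dot (M N : ℕ) (A : Matrix (Fin M) (Fin N) ℝ) (u : Fin M → ℝ) (v : Fin N → ℝ) :
    Aᵀ.mulVec u ⬝ᵥ v = u ⬝ᵥ A.mulVec v := by
  rw [Matrix.mulVec_transpose, Matrix.dotProduct_mulVec]

/-- Finite-dimensional exact form of Theorem 3 for the VAMP algorithm, whose
linear step is `h = q + γ⁻¹·Aᵀ·W⁻¹·(w - A·q)` with `W = v_w·I + v_q·A·Aᵀ`: under the exact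
orthogonality, cross-correlation and moment identities, the derivative of the quadratic
polynomial at `α̂ = α` equals `((v_w - v_h)/v_q)·(ψ - v_q)`. -/
theorem derivative_value_vamp
    (N M : ℕ) (hN : 0 < N) (hM : 0 < M)
    (A : Matrix (Fin M) (Fin N) ℝ) (x q g : Fin N → ℝ) (w : Fin M → ℝ)
    (α ψ γ vq vw vh : ℝ) (hvw : vw > 0) (hvq : vq > 0) (hγ : γ ≠ 0)
    (W : Matrix (Fin M) (Fin M) ℝ) (hW : W = vw • (1 : Matrix (Fin M) (Fin M) ℝ) + vq • (A * Aᵀ))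
    (hWinv : IsUnit W.det)
    (z : Fin M → ℝ) (hz : z = w - A.mulVec q)
    (F : Fin M → ℝ) (hF : F = W⁻¹.mulVec z)
    (h : Fin N → ℝ) (hh : h = q + γ⁻¹ • Aᵀ.mulVec F)
    (r : Fin N → ℝ) (hr : r = x + h)
    (y : Fin M → ℝ) (hy : y = A.mulVec x + w)
    (qbar : Fin N → ℝ) (hqbar : qbar = g - α • r - x)
    (u₂ u₃ : ℝ)
    (hu₂ : u₂ = (2 / N) * ((r - g) ⬝ᵥ r - (y - A.mulVec g) ⬝ᵥ (A.mulVec r)))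
    (hu₃ : u₃ = (1 / N) * (r ⬝ᵥ r) - (1 / N) * (A.mulVec r ⬝ᵥ A.mulVec r))
    (h1 : x ⬝ᵥ h = 0)
    (h2 : x ⬝ᵥ qbar = 0)
    (h3 : x ⬝ᵥ (Aᵀ.mulVec (w - A.mulVec qbar)) = 0)
    (h4 : h ⬝ᵥ qbar = 0)
    (h5 : (1 / N) * (h ⬝ᵥ Aᵀ.mulVec w) = vw)
    (h6 : (1 / N) * (h ⬝ᵥ h) = vh)
    (h7 : (1 / N) * (q ⬝ᵥ Aᵀ.mulVec (A.mulVec qbar)) = ψ)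
    (h8 : (1 / N) * (z ⬝ᵥ A.mulVec qbar) = -ψ)
    (h9 : (1 / N) * (F ⬝ᵥ A.mulVec qbar) = -γ * ψ)
    (h10 : vh = γ⁻¹ - vq) :
    (1 / 2) * (u₂ + 2 * u₃ * α) = ((vw - vh) / vq) * (ψ - vq) := by
  have hn : (N : ℝ) ≠ 0 := Nat.cast_ne_zero.mpr hN.ne'
  have hvq' : vq ≠ 0 := hvq.ne'
  set b : Fin M → ℝ := A.mulVec qbar with hb
  -- scalar versions
  have s5 : h ⬝ᵥ Aᵀ.mulVec w = N * vw := by field_simp at h5; linarith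
  have s6 : h ⬝ᵥ h = N * vh := by field_simp at h6; linarith
  have s7 : q ⬝ᵥ Aᵀ.mulVec b = N * ψ := by field_simp at h7; linarith
  have s8 : z ⬝ᵥ b = -(N * ψ) := by field_simp at h8; linarith
  have s9 : F ⬝ᵥ b = -(γ * ψ * N) := by field_simp at h9; linarith
  -- W F = z
  have hWF : W.mulVec F = z := by
    rw [hF, Matrix.mulVec_mulVec, Matrix.mul_nonsing_inv _ hWinv, Matrix.one_mulVec]
  have hAAF : vw • F + vq • (A * Aᵀ).mulVec F = z := by
    rw [← hWF, hW, Matrix.add_mulVec, Matrix.smul_mulVec, Matrix.smul_mulVec,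
      Matrix.one_mulVec]
  -- dot with b
  have key1 : vw * (F ⬝ᵥ b) + vq * ((A * Aᵀ).mulVec F ⬝ᵥ b) = z ⬝ᵥ b := by
    rw [← hAAF]; simp [add_dotProduct, smul_dotProduct]
  -- the cross term T
  have hAFb : Aᵀ.mulVec F ⬝ᵥ Aᵀ.mulVec b = (A * Aᵀ).mulVec F ⬝ᵥ b := by
    rw [transp_dot, Matrix.mulVec_mulVec, ← transp_dot, Matrix.transpose_mul,
      Matrix.transpose_transpose]
  have sT : h ⬝ᵥ Aᵀ.mulVec b =
      N * ψ + γ⁻¹ * ((z ⬝ᵥ b - vw * (F ⬝ᵥ b)) / vq) := by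
    have e1 : (A * Aᵀ).mulVec F ⬝ᵥ b = (z ⬝ᵥ b - vw * (F ⬝ᵥ b)) / vq := by
      field_simp; linarith
    rw [hh, add_dotProduct, smul_dotProduct, s7, hAFb, e1]
    simp [smul_eq_mul]
  -- main expansion
  have main : (1 / 2) * (u₂ + 2 * u₃ * α)
      = (1 / N) * ((h - qbar) ⬝ᵥ r - (w - b) ⬝ᵥ A.mulVec r) := by
    have hg : g = qbar + α • r + x := by rw [hqbar]; abel
    have hyg : y - A.mulVec g = (w - b) - α • A.mulVec r := by
      rw [hy, hg, hb, Matrix.mulVec_add, Matrix.mulVec_add, Matrix.mulVec_smul]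
      abel
    have hrg : r - g = (h - qbar) - α • r := by
      rw [hg, hr]; abel
    rw [hu₂, hu₃, hrg, hyg]
    simp only [sub_dotProduct, smul_dotProduct, smul_eq_mul]
    field_simp
    ring
  -- expand the dot products
  have eval1 : (h - qbar) ⬝ᵥ r = N * vh := by
    rw [hr, sub_dotProduct, dotProduct_add, dotProduct_add,
      dotProduct_comm h x, dotProduct_comm qbar x,
      dotProduct_comm qbar h, h1, h2, h4, s6]
    ring
  have eval2 : (w - b) ⬝ᵥ A.mulVec r = N * vw - h ⬝ᵥ Aᵀ.mulVec b := by
    have e3 : (w - b) ⬝ᵥ A.mulVec x = 0 := by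
      rw [← transp_dot, dotProduct_comm]
      exact h3
    have e4 : (w - b) ⬝ᵥ A.mulVec h = N * vw - h ⬝ᵥ Aᵀ.mulVec b := by
      rw [sub_dotProduct, ← transp_dot, ← transp_dot,
        dotProduct_comm _ h, dotProduct_comm _ h, s5]
    rw [hr, Matrix.mulVec_add, dotProduct_add, e3, e4]
    ring
  rw [main, eval1, eval2, sT, s8, s9, h10]
  field_simp
  ring
end

section
/- Let p be a Borel probability measure on [0, ∞), and let v_w > 0, v_q > 0 and δ ∈ (0, 1) be real numbers. Define γ := δ·∫ λ/(v_w + v_q·λ) dp(λ). If v_q > v_w/(δ⁻¹ − 1), then γ·(v_q + v_w) < 1; in particular, if moreover γ > 0, then γ⁻¹ − v_q − v_w > 0. -/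
open MeasureTheory

/-- Lemma 1 of the paper: for a probability measure `p` supported on
`[0, ∞)`, with `γ = δ·∫ λ/(v_w + v_q·λ) dp(λ)`, if `v_q > v_w/(δ⁻¹ - 1)` then
`γ·(v_q + v_w) < 1`; in particular if `γ > 0` then `γ⁻¹ - v_q - v_w > 0`. -/
theorem vamp_vh_gt_vw
    (p : Measure ℝ) [IsProbabilityMeasure p] (hsupp : p (Set.Iio 0) = 0)
    (vw vq δ : ℝ) (hvw : vw > 0) (hvq : vq > 0) (hδ : δ ∈ Set.Ioo (0 : ℝ) 1)
    (γ : ℝ) (hγ : γ = δ * ∫ l, l / (vw + vq * l) ∂p)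
    (hcond : vq > vw / (δ⁻¹ - 1)) :
    γ * (vq + vw) < 1 ∧ (γ > 0 → γ⁻¹ - vq - vw > 0) := by
  obtain ⟨hδ0, hδ1⟩ := hδ
  have hae : ∀ᵐ l ∂p, 0 ≤ l := by
    rw [ae_iff]
    convert hsupp using 2
    ext l
    simp [Set.Iio, not_le]
  have hI : ∫ l, l / (vw + vq * l) ∂p ≤ 1 / vq := by
    by_cases hint : Integrable (fun l => l / (vw + vq * l)) p
    · have hmono : ∫ l, l / (vw + vq * l) ∂p ≤ ∫ _, 1 / vq ∂p := by
        refine integral_mono_ae hint (integrable_const _) ?_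
        filter_upwards [hae] with l hl
        have hd : 0 < vw + vq * l := by positivity
        rw [div_le_div_iff₀ hd hvq]
        nlinarith
      simpa using hmono
    · rw [integral_undef hint]
      positivity
  have hγle : γ ≤ δ / vq := by
    rw [hγ, div_eq_mul_one_div δ vq]
    exact mul_le_mul_of_nonneg_left hI (le_of_lt hδ0)
  have h1 : 0 < δ⁻¹ - 1 := by
    have : 1 < δ⁻¹ := ((one_lt_inv₀ hδ0).mpr hδ1 : 1 < δ⁻¹)
    linarith
  have hinv : δ * δ⁻¹ = 1 := mul_inv_cancel₀ (ne_of_gt hδ0)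
  have h2 : vw < vq * (δ⁻¹ - 1) := (div_lt_iff₀ h1).mp hcond
  have hkey : δ / vq * (vq + vw) < 1 := by
    rw [div_mul_eq_mul_div, div_lt_one hvq]
    nlinarith
  have hmain : γ * (vq + vw) < 1 := by
    calc γ * (vq + vw) ≤ δ / vq * (vq + vw) :=
          mul_le_mul_of_nonneg_right hγle (by positivity)
      _ < 1 := hkey
  refine ⟨hmain, fun hγpos => ?_⟩
  have : vq + vw < 1 / γ := (lt_div_iff₀ hγpos).mpr (by linarith [mul_comm γ (vq + vw)])
  rw [one_div] at this
  linarith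
end

section
/- Let N be a positive integer, f : ℝ^N → ℝ^N a continuously differentiable function, x ∈ ℝ^N, and n a random vector in ℝ^N defined on a probability space such that the coordinates n₁, …, n_N are independent, each with mean 0 and variance 1, and ‖n‖ ≤ C almost surely for some constant C. Then lim_{ε → 0⁺} E[ nᵀ·(f(x + ε·n) − f(x))/ε ] = ∑_{i=1}^N (∂f_i/∂x_i)(x), i.e. the limit equals the divergence ∇·f(x) of f at x. -/
open MeasureTheory ProbabilityTheory Filter

/-- The Black-Box Monte Carlo divergence identity: for a continuously
differentiable `f : ℝ^N → ℝ^N` and a bounded random probe `n` with independent, zero-mean,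
unit-variance coordinates,
`lim_{ε→0⁺} E[nᵀ·(f(x + ε·n) - f(x))/ε] = ∑ i, ∂f_i/∂x_i (x) = ∇·f(x)`. -/
theorem black_box_mc_divergence
    (N : ℕ) (hN : 0 < N)
    (f : EuclideanSpace ℝ (Fin N) → EuclideanSpace ℝ (Fin N)) (hf : ContDiff ℝ 1 f)
    (x : EuclideanSpace ℝ (Fin N))
    {Ω : Type*} [MeasureSpace Ω] [IsProbabilityMeasure (ℙ : Measure Ω)]
    (n : Ω → EuclideanSpace ℝ (Fin N)) (hmeas : Measurable n)
    (hindep : iIndepFun (fun i ω => n ω i) ℙ)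
    (hmean : ∀ i, ∫ ω, n ω i = 0)
    (hvar : ∀ i, ∫ ω, (n ω i) ^ 2 = 1)
    (C : ℝ) (hbound : ∀ᵐ ω, ‖n ω‖ ≤ C) :
    Tendsto
      (fun ε : ℝ => ∫ ω, ∑ i, n ω i * ((f (x + ε • n ω) - f x) i / ε))
      (nhdsWithin 0 (Set.Ioi 0))
      (nhds (∑ i, fderiv ℝ f x (EuclideanSpace.single i 1) i)) := by
  classical
  have hfc : Continuous f := hf.continuous
  set A := fderiv ℝ f x with hA
  set C' := max C 0 with hC'
  have hC'0 : 0 ≤ C' := le_max_right _ _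
  have hbound' : ∀ᵐ ω, ‖n ω‖ ≤ C' := hbound.mono fun ω h => h.trans (le_max_left _ _)
  -- coordinate bound
  have hcoord : ∀ (v : EuclideanSpace ℝ (Fin N)) (i : Fin N), |v i| ≤ ‖v‖ := by
    intro v i
    have h := abs_real_inner_le_norm (EuclideanSpace.single i (1 : ℝ)) v
    simpa [EuclideanSpace.inner_single_left, EuclideanSpace.norm_single] using h
  -- rewrite the integrand as an inner product
  have hrepr : ∀ (ε : ℝ) (ω : Ω),
      (∑ i, n ω i * ((f (x + ε • n ω) - f x) i / ε))
        = (inner ℝ (n ω) (ε⁻¹ • (f (x + ε • n ω) - f x)) : ℝ) := by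
    intro ε ω
    rw [PiLp.inner_apply]
    refine Finset.sum_congr rfl fun i _ => ?_
    simp [PiLp.smul_apply, smul_eq_mul, div_eq_inv_mul, RCLike.inner_apply, mul_comm,
      mul_left_comm]
  -- pointwise difference quotient convergence
  have key : ∀ v : EuclideanSpace ℝ (Fin N),
      Tendsto (fun ε : ℝ => ε⁻¹ • (f (x + ε • v) - f x)) (nhdsWithin 0 (Set.Ioi 0))
        (nhds (A v)) := by
    intro v
    have hline : HasDerivAt (fun t : ℝ => x + t • v) v 0 := by
      simpa using ((hasDerivAt_id (0 : ℝ)).smul_const v).const_add x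
    have h1 : HasDerivAt (fun t : ℝ => f (x + t • v)) (A v) 0 := by
      have h2 := ((hf.differentiable one_ne_zero (x + (0 : ℝ) • v)).hasFDerivAt).comp_hasDerivAt 0 hline
      simp only [zero_smul, add_zero] at h2
      exact h2
    have h3 := hasDerivAt_iff_tendsto_slope.mp h1
    have h4 : Tendsto (slope (fun t : ℝ => f (x + t • v)) 0) (nhdsWithin 0 (Set.Ioi 0))
        (nhds (A v)) := h3.mono_left (nhdsWithin_mono _ (fun t ht => ne_of_gt ht))
    refine h4.congr fun ε => ?_
    simp [slope_def_module]
  -- a bound on the derivative near x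
  obtain ⟨M, hM⟩ : ∃ M, ∀ y ∈ Metric.closedBall x C', ‖fderiv ℝ f y‖ ≤ M :=
    (isCompact_closedBall x C').exists_bound_of_continuousOn
      ((hf.continuous_fderiv one_ne_zero).continuousOn)
  set M' := max M 0 with hM'
  have hM'0 : 0 ≤ M' := le_max_right _ _
  have hMle : ∀ y ∈ Metric.closedBall x C', ‖fderiv ℝ f y‖ ≤ M' :=
    fun y hy => (hM y hy).trans (le_max_left _ _)
  -- rewrite the goal
  have hgoal : (fun ε : ℝ => ∫ ω, ∑ i, n ω i * ((f (x + ε • n ω) - f x) i / ε))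
      = fun ε : ℝ => ∫ ω, (inner ℝ (n ω) (ε⁻¹ • (f (x + ε • n ω) - f x)) : ℝ) := by
    funext ε
    exact integral_congr_ae (Filter.Eventually.of_forall fun ω => hrepr ε ω)
  rw [hgoal]
  -- the limit integrand
  have hlim_eq : ∫ ω, (inner ℝ (n ω) (A (n ω)) : ℝ)
      = ∑ i, A (EuclideanSpace.single i 1) i := by
    -- expand in coordinates
    have hexp : ∀ ω, (inner ℝ (n ω) (A (n ω)) : ℝ)
        = ∑ i, ∑ j, (n ω i * n ω j) * A (EuclideanSpace.single j 1) i := by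
      intro ω
      rw [PiLp.inner_apply]
      refine Finset.sum_congr rfl fun i _ => ?_
      have hAv : A (n ω) i = ∑ j, n ω j * A (EuclideanSpace.single j 1) i := by
        have hv : n ω = ∑ j, n ω j • EuclideanSpace.single j (1 : ℝ) := by
          ext k
          rw [WithLp.ofLp_sum, Finset.sum_apply k Finset.univ _]
          simp [EuclideanSpace.single_apply, PiLp.smul_apply]
        conv_lhs => rw [hv, map_sum, WithLp.ofLp_sum, Finset.sum_apply i Finset.univ _]
        simp [PiLp.smul_apply]
      rw [RCLike.inner_apply, hAv, Finset.sum_mul]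
      simp [starRingEnd_apply, mul_assoc, mul_comm, mul_left_comm]
    rw [integral_congr_ae (Filter.Eventually.of_forall hexp)]
    -- measurability and integrability of coordinate products
    have hmcoord : ∀ i : Fin N, Measurable fun ω => n ω i :=
      fun i => (measurable_pi_apply i).comp (Measurable.comp (WithLp.measurable_ofLp 2 (Fin N → ℝ)) hmeas)
    have hint : ∀ i j : Fin N, Integrable (fun ω => n ω i * n ω j) ℙ := by
      intro i j
      refine Integrable.mono' (integrable_const (C' * C')) 
        ((hmcoord i).mul (hmcoord j)).aestronglyMeasurable ?_
      filter_upwards [hbound'] with ω hω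
      rw [Real.norm_eq_abs, abs_mul]
      exact mul_le_mul ((hcoord _ i).trans hω) ((hcoord _ j).trans hω) (abs_nonneg _) hC'0
    have hmom : ∀ i j : Fin N, ∫ ω, n ω i * n ω j = if i = j then 1 else 0 := by
      intro i j
      by_cases hij : i = j
      · subst hij
        simp only [if_true]
        have := hvar i
        rw [← this]
        congr 1; funext ω; ring
      · simp only [hij, if_false]
        have hind : IndepFun (fun ω => n ω i) (fun ω => n ω j) ℙ := hindep.indepFun hij
        rw [show (fun ω => n ω i * n ω j) = (fun ω => n ω i) * fun ω => n ω j from rfl] at *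
        rw [IndepFun.integral_mul_eq_mul_integral hind (hmcoord i).aestronglyMeasurable (hmcoord j).aestronglyMeasurable,
          hmean i, hmean j, zero_mul]
    rw [integral_finset_sum _ (fun i _ => integrable_finset_sum _
      (fun j _ => (hint i j).mul_const _))]
    have : ∀ i : Fin N, (∫ ω, ∑ j, (n ω i * n ω j) * A (EuclideanSpace.single j 1) i)
        = A (EuclideanSpace.single i 1) i := by
      intro i
      rw [integral_finset_sum _ (fun j _ => (hint i j).mul_const _)]
      have : ∀ j : Fin N, (∫ ω, (n ω i * n ω j) * A (EuclideanSpace.single j 1) i)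
          = (if i = j then 1 else 0) * A (EuclideanSpace.single j 1) i := by
        intro j
        rw [integral_mul_const, hmom i j]
      rw [Finset.sum_congr rfl fun j _ => this j]
      simp
    exact Finset.sum_congr rfl fun i _ => this i
  rw [← hlim_eq]
  -- dominated convergence
  refine tendsto_integral_filter_of_dominated_convergence (fun _ => C' * (C' * M')) ?_ ?_
    (integrable_const _) ?_
  · -- measurability
    refine Filter.Eventually.of_forall fun ε => ?_
    have hcont : Continuous fun v : EuclideanSpace ℝ (Fin N) =>
        (inner ℝ v (ε⁻¹ • (f (x + ε • v) - f x)) : ℝ) :=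
      continuous_id.inner (((hfc.comp (continuous_const.add
        (continuous_id.const_smul ε))).sub continuous_const).const_smul ε⁻¹)
    exact (hcont.measurable.comp hmeas).aestronglyMeasurable
  · -- the bound
    have hIoo : Set.Ioo (0 : ℝ) 1 ∈ nhdsWithin (0 : ℝ) (Set.Ioi 0) :=
      Ioo_mem_nhdsGT_of_mem (by norm_num : (0 : ℝ) ∈ Set.Ico (0 : ℝ) 1)
    filter_upwards [hIoo] with ε hε
    filter_upwards [hbound'] with ω hω
    have hε0 : 0 < ε := hε.1
    have hmem : x + ε • n ω ∈ Metric.closedBall x C' := by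
      rw [Metric.mem_closedBall, dist_eq_norm]
      have : ‖x + ε • n ω - x‖ = ε * ‖n ω‖ := by
        rw [add_sub_cancel_left, norm_smul, Real.norm_eq_abs, abs_of_pos hε0]
      rw [this]
      calc ε * ‖n ω‖ ≤ 1 * C' := by
            apply mul_le_mul hε.2.le hω (norm_nonneg _) zero_le_one
        _ = C' := one_mul _
    have hxmem : x ∈ Metric.closedBall x C' := Metric.mem_closedBall_self hC'0
    have hdiff : ‖f (x + ε • n ω) - f x‖ ≤ M' * (ε * ‖n ω‖) := by
      have := (convex_closedBall x C').norm_image_sub_le_of_norm_fderiv_le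
        (fun y _ => hf.differentiable one_ne_zero y) hMle hxmem hmem
      calc ‖f (x + ε • n ω) - f x‖ ≤ M' * ‖x + ε • n ω - x‖ := this
        _ = M' * (ε * ‖n ω‖) := by
            rw [add_sub_cancel_left, norm_smul, Real.norm_eq_abs, abs_of_pos hε0]
    calc ‖(inner ℝ (n ω) (ε⁻¹ • (f (x + ε • n ω) - f x)) : ℝ)‖
        ≤ ‖n ω‖ * ‖ε⁻¹ • (f (x + ε • n ω) - f x)‖ := norm_inner_le_norm _ _
      _ = ‖n ω‖ * (ε⁻¹ * ‖f (x + ε • n ω) - f x‖) := by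
          rw [norm_smul, Real.norm_eq_abs, abs_of_pos (inv_pos.mpr hε0)]
      _ ≤ C' * (ε⁻¹ * (M' * (ε * ‖n ω‖))) := by
          apply mul_le_mul hω _ (by positivity) hC'0
          exact mul_le_mul_of_nonneg_left hdiff (by positivity)
      _ = C' * (M' * ‖n ω‖) := by
          field_simp
      _ ≤ C' * (C' * M') := by
          apply mul_le_mul_of_nonneg_left _ hC'0
          rw [mul_comm C' M']
          exact mul_le_mul_of_nonneg_left hω hM'0
  · -- a.e. pointwise limit
    refine Filter.Eventually.of_forall fun ω => ?_
    exact tendsto_const_nhds.inner (key (n ω))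
end
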